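/- Under the same definitions of k_i, l_i and with (p₁)_x = k₃p₁²+2k₁p₁-k₂, (p₁)_t = l₃p₁²+2l₁p₁-l₂, the system (z₁)_x = -(k₁+p₁k₃), (z₁)_t = -(l₁+p₁l₃) is compatible: D_t(-(k₁+p₁k₃)) = D_x(-(l₁+p₁l₃)) by virtue of the KN equation. -/

import Mathlib

noncomputable section

open Real

/-- Total `x`-derivative (on solutions: partial derivative in `x`). -/
def Dx (f : ℝ → ℝ → ℝ) : ℝ → ℝ → ℝ := fun x t => deriv (fun y => f y t) x

/-- Total `t`-derivative (on solutions: partial derivative in `t`). -/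
def Dt (f : ℝ → ℝ → ℝ) : ℝ → ℝ → ℝ := fun x t => deriv (fun s => f x s) t

/-- The cubic polynomial `P(u) = u³ + c₁ u + c₀`. -/
def Pcub (c₀ c₁ v : ℝ) : ℝ := v ^ 3 + c₁ * v + c₀

/-- `P′(u) = 3u² + c₁`. -/
def Pder (c₁ v : ℝ) : ℝ := 3 * v ^ 2 + c₁

/-- Right-hand side of the Krichever–Novikov equation. -/
def G1 (c₀ c₁ : ℝ) (u : ℝ → ℝ → ℝ) : ℝ → ℝ → ℝ := fun x t =>
  Dx (Dx (Dx u)) x t - (3 / 2) * (Dx (Dx u) x t) ^ 2 / Dx u x t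
    + Pcub c₀ c₁ (u x t) / Dx u x t

/-- Fréchet derivative of `G₁` applied to `G`:
`(G₁)⋆(G) = Σ_k (∂G₁/∂u_{kx}) Dₓᵏ(G)` with the explicit partial derivatives
`∂G₁/∂u = P′/u_x`, `∂G₁/∂u_x = (3/2)u_xx²/u_x² - P/u_x²`,
`∂G₁/∂u_xx = -3u_xx/u_x`, `∂G₁/∂u_xxx = 1`. -/
def FrG1 (c₀ c₁ : ℝ) (u G : ℝ → ℝ → ℝ) : ℝ → ℝ → ℝ := fun x t =>
  (Pder c₁ (u x t) / Dx u x t) * G x t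
    + ((3 / 2) * (Dx (Dx u) x t) ^ 2 / (Dx u x t) ^ 2
        - Pcub c₀ c₁ (u x t) / (Dx u x t) ^ 2) * Dx G x t
    + (-(3 * Dx (Dx u) x t) / Dx u x t) * Dx (Dx G) x t
    + Dx (Dx (Dx G)) x t

/-- Coefficient `k₁` of the covering. -/
def k1 (c₀ c₁ : ℝ) (u : ℝ → ℝ → ℝ) : ℝ → ℝ → ℝ := fun x t =>
  -(Real.sqrt 6 * (c₁ * u x t + 2 * c₀)) / (12 * Real.sqrt c₀ * Dx u x t)

/-- Coefficient `k₂` of the covering. -/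
def k2 (c₀ c₁ : ℝ) (u : ℝ → ℝ → ℝ) : ℝ → ℝ → ℝ := fun x t =>
  Real.sqrt 6 * c₁ * u x t / (12 * Real.sqrt c₀ * Dx u x t)

/-- Coefficient `k₃` of the covering. -/
def k3 (c₀ c₁ : ℝ) (u : ℝ → ℝ → ℝ) : ℝ → ℝ → ℝ := fun x t =>
  Real.sqrt 6 * u x t * (4 * c₀ * u x t - c₁ ^ 2) / (12 * c₁ * Real.sqrt c₀ * Dx u x t)

/-- Coefficient `m` of the covering. -/
def mco (c₀ c₁ : ℝ) (u : ℝ → ℝ → ℝ) : ℝ → ℝ → ℝ := fun x t =>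
  2 * (c₁ ^ 2 - 8 * c₀ * u x t - 2 * c₁ * (u x t) ^ 2) / (3 * c₁ * Dx u x t)

/-- Coefficient `l₁` of the covering. -/
def l1 (c₀ c₁ : ℝ) (u : ℝ → ℝ → ℝ) : ℝ → ℝ → ℝ := fun x t =>
  -(Real.sqrt 6 / (72 * Real.sqrt c₀ * (Dx u x t) ^ 3)) *
    (-(6 * c₁ * u x t * Dx u x t * Dx (Dx (Dx u)) x t)
      - 12 * c₀ * Dx u x t * Dx (Dx (Dx u)) x t
      + 3 * c₁ * u x t * (Dx (Dx u) x t) ^ 2 + 6 * c₀ * (Dx (Dx u) x t) ^ 2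
      + 12 * c₁ * (Dx u x t) ^ 2 * Dx (Dx u) x t
      + 4 * Real.sqrt 6 * Real.sqrt c₀ * (u x t) ^ 2 * (Dx u x t) ^ 2
      - 2 * c₁ * (u x t) ^ 4 - 4 * c₀ * (u x t) ^ 3 - 2 * c₁ ^ 2 * (u x t) ^ 2
      - 6 * c₀ * c₁ * u x t - 4 * c₀ ^ 2)

/-- Coefficient `l₂` of the covering. -/
def l2 (c₀ c₁ : ℝ) (u : ℝ → ℝ → ℝ) : ℝ → ℝ → ℝ := fun x t =>
  Real.sqrt 6 * c₁ / (72 * Real.sqrt c₀ * (Dx u x t) ^ 3) *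
    (-(6 * u x t * Dx u x t * Dx (Dx (Dx u)) x t)
      + 3 * u x t * (Dx (Dx u) x t) ^ 2 + 12 * (Dx u x t) ^ 2 * Dx (Dx u) x t
      + 4 * Real.sqrt 6 * Real.sqrt c₀ * (Dx u x t) ^ 2
      - 2 * (u x t) ^ 4 - 2 * c₁ * (u x t) ^ 2 - 2 * c₀ * u x t)

/-- Coefficient `l₃` of the covering. -/
def l3 (c₀ c₁ : ℝ) (u : ℝ → ℝ → ℝ) : ℝ → ℝ → ℝ := fun x t =>
  -(Real.sqrt 6 / (72 * c₁ * Real.sqrt c₀ * (Dx u x t) ^ 3)) *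
    (-(6 * c₁ ^ 2 * u x t * Dx u x t * Dx (Dx (Dx u)) x t)
      + 24 * c₀ * (u x t) ^ 2 * Dx u x t * Dx (Dx (Dx u)) x t
      + 3 * c₁ ^ 2 * u x t * (Dx (Dx u) x t) ^ 2
      - 12 * c₀ * (u x t) ^ 2 * (Dx (Dx u) x t) ^ 2
      + 12 * c₁ ^ 2 * (Dx u x t) ^ 2 * Dx (Dx u) x t
      - 96 * c₀ * u x t * (Dx u x t) ^ 2 * Dx (Dx u) x t
      + 96 * c₀ * (Dx u x t) ^ 4
      - 4 * Real.sqrt 6 * Real.sqrt c₀ * c₁ ^ 2 * (Dx u x t) ^ 2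
      + 32 * Real.sqrt 6 * (c₀ * Real.sqrt c₀) * u x t * (Dx u x t) ^ 2
      + 8 * Real.sqrt 6 * Real.sqrt c₀ * c₁ * (u x t) ^ 2 * (Dx u x t) ^ 2
      + 8 * c₀ * (u x t) ^ 5 - 2 * c₁ ^ 2 * (u x t) ^ 4 + 8 * c₀ * c₁ * (u x t) ^ 3
      - 2 * c₁ ^ 3 * (u x t) ^ 2 + 8 * c₀ ^ 2 * (u x t) ^ 2 - 2 * c₀ * c₁ ^ 2 * u x t)

/-- Right-hand side of `(p₁)_x = k₃p₁² + 2k₁p₁ - k₂`. -/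
def Fp1x (c₀ c₁ : ℝ) (u : ℝ → ℝ → ℝ) : ℝ → ℝ → ℝ → ℝ := fun x t pp =>
  k3 c₀ c₁ u x t * pp ^ 2 + 2 * k1 c₀ c₁ u x t * pp - k2 c₀ c₁ u x t

/-- Right-hand side of `(p₁)_t = l₃p₁² + 2l₁p₁ - l₂`. -/
def Fp1t (c₀ c₁ : ℝ) (u : ℝ → ℝ → ℝ) : ℝ → ℝ → ℝ → ℝ := fun x t pp =>
  l3 c₀ c₁ u x t * pp ^ 2 + 2 * l1 c₀ c₁ u x t * pp - l2 c₀ c₁ u x t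

/-- Total `x`-derivative extended to the nonlocal variable `p₁`. -/
def DxExt (c₀ c₁ : ℝ) (u : ℝ → ℝ → ℝ) (F : ℝ → ℝ → ℝ → ℝ) : ℝ → ℝ → ℝ → ℝ :=
  fun x t pp => deriv (fun y => F y t pp) x
    + Fp1x c₀ c₁ u x t pp * deriv (fun rr => F x t rr) pp

/-- Total `t`-derivative extended to the nonlocal variable `p₁`. -/
def DtExt (c₀ c₁ : ℝ) (u : ℝ → ℝ → ℝ) (F : ℝ → ℝ → ℝ → ℝ) : ℝ → ℝ → ℝ → ℝ :=
  fun x t pp => deriv (fun s => F x s pp) t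
    + Fp1t c₀ c₁ u x t pp * deriv (fun rr => F x t rr) pp

/-- Right-hand side of `(z₁)_x = -(k₁ + p₁k₃)`. -/
def Fz1x (c₀ c₁ : ℝ) (u : ℝ → ℝ → ℝ) : ℝ → ℝ → ℝ → ℝ := fun x t pp =>
  -(k1 c₀ c₁ u x t + pp * k3 c₀ c₁ u x t)

/-- Right-hand side of `(z₁)_t = -(l₁ + p₁l₃)`. -/
def Fz1t (c₀ c₁ : ℝ) (u : ℝ → ℝ → ℝ) : ℝ → ℝ → ℝ → ℝ := fun x t pp =>
  -(l1 c₀ c₁ u x t + pp * l3 c₀ c₁ u x t)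

private lemma KN_hasDerivAt_x (f : ℝ → ℝ → ℝ) (hf : ContDiff ℝ (⊤ : ℕ∞) (Function.uncurry f))
    (x t : ℝ) :
    HasDerivAt (fun y => f y t) (fderiv ℝ (Function.uncurry f) (x, t) (1, 0)) x :=
  ((hf.differentiable (by simp) (x, t)).hasFDerivAt).comp_hasDerivAt (f := fun y => (y, t)) x
    ((hasDerivAt_id x).prodMk (hasDerivAt_const x t))

private lemma KN_hasDerivAt_t (f : ℝ → ℝ → ℝ) (hf : ContDiff ℝ (⊤ : ℕ∞) (Function.uncurry f))
    (x t : ℝ) :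
    HasDerivAt (fun s => f x s) (fderiv ℝ (Function.uncurry f) (x, t) (0, 1)) t :=
  ((hf.differentiable (by simp) (x, t)).hasFDerivAt).comp_hasDerivAt t
    ((hasDerivAt_const t x).prodMk (hasDerivAt_id t))

private lemma KN_Dx_eq (f : ℝ → ℝ → ℝ) (hf : ContDiff ℝ (⊤ : ℕ∞) (Function.uncurry f)) (x t : ℝ) :
    Dx f x t = fderiv ℝ (Function.uncurry f) (x, t) (1, 0) :=
  (KN_hasDerivAt_x f hf x t).deriv

private lemma KN_Dt_eq (f : ℝ → ℝ → ℝ) (hf : ContDiff ℝ (⊤ : ℕ∞) (Function.uncurry f)) (x t : ℝ) :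
    Dt f x t = fderiv ℝ (Function.uncurry f) (x, t) (0, 1) :=
  (KN_hasDerivAt_t f hf x t).deriv

private lemma KN_slice_x (f : ℝ → ℝ → ℝ) (hf : ContDiff ℝ (⊤ : ℕ∞) (Function.uncurry f)) (x t : ℝ) :
    HasDerivAt (fun y => f y t) (Dx f x t) x := by
  rw [KN_Dx_eq f hf x t]; exact KN_hasDerivAt_x f hf x t

private lemma KN_slice_t (f : ℝ → ℝ → ℝ) (hf : ContDiff ℝ (⊤ : ℕ∞) (Function.uncurry f)) (x t : ℝ) :
    HasDerivAt (fun s => f x s) (Dt f x t) t := by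
  rw [KN_Dt_eq f hf x t]; exact KN_hasDerivAt_t f hf x t

private lemma KN_contDiff_Dx (f : ℝ → ℝ → ℝ) (hf : ContDiff ℝ (⊤ : ℕ∞) (Function.uncurry f)) :
    ContDiff ℝ (⊤ : ℕ∞) (Function.uncurry (Dx f)) := by
  have h : Function.uncurry (Dx f)
      = fun p : ℝ × ℝ => fderiv ℝ (Function.uncurry f) p (1, 0) := by
    funext p
    exact KN_Dx_eq f hf p.1 p.2
  rw [h]
  exact (hf.fderiv_right (by simp)).clm_apply contDiff_const

private lemma KN_comm (f : ℝ → ℝ → ℝ) (hf : ContDiff ℝ (⊤ : ℕ∞) (Function.uncurry f)) (x t : ℝ) :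
    Dt (Dx f) x t = Dx (Dt f) x t := by
  have hg : ContDiff ℝ (⊤ : ℕ∞) (fderiv ℝ (Function.uncurry f)) := hf.fderiv_right (by simp)
  have h1 : (fun s => Dx f x s) = fun s => fderiv ℝ (Function.uncurry f) (x, s) (1, 0) :=
    funext fun s => KN_Dx_eq f hf x s
  have h2 : (fun y => Dt f y t) = fun y => fderiv ℝ (Function.uncurry f) (y, t) (0, 1) :=
    funext fun y => KN_Dt_eq f hf y t
  have hb : HasDerivAt (fun s => fderiv ℝ (Function.uncurry f) (x, s))
      (fderiv ℝ (fderiv ℝ (Function.uncurry f)) (x, t) (0, 1)) t :=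
    ((hg.differentiable (by simp) (x, t)).hasFDerivAt).comp_hasDerivAt t
      ((hasDerivAt_const t x).prodMk (hasDerivAt_id t))
  have hc : HasDerivAt (fun y => fderiv ℝ (Function.uncurry f) (y, t))
      (fderiv ℝ (fderiv ℝ (Function.uncurry f)) (x, t) (1, 0)) x :=
    ((hg.differentiable (by simp) (x, t)).hasFDerivAt).comp_hasDerivAt x
      ((hasDerivAt_id x).prodMk (hasDerivAt_const x t))
  have hb' := hb.clm_apply (hasDerivAt_const t ((1 : ℝ), (0 : ℝ)))
  have hc' := hc.clm_apply (hasDerivAt_const x ((0 : ℝ), (1 : ℝ)))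
  have hsym := ((hf.contDiffAt (x := (x, t))).isSymmSndFDerivAt (by rw [minSmoothness_of_isRCLikeNormedField]; exact WithTop.coe_le_coe.mpr le_top))
    ((0 : ℝ), (1 : ℝ)) ((1 : ℝ), (0 : ℝ))
  show deriv (fun s => Dx f x s) t = deriv (fun y => Dt f y t) x
  rw [h1, h2, hb'.deriv, hc'.deriv]
  simp [hsym]

set_option maxHeartbeats 4000000 in
/-- The system `(z₁)_x = -(k₁+p₁k₃)`, `(z₁)_t = -(l₁+p₁l₃)` is
compatible: `D_t(-(k₁+p₁k₃)) = D_x(-(l₁+p₁l₃))` identically in `p₁`, with the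
derivatives of `p₁` replaced by the right-hand sides of its defining system,
by virtue of the Krichever–Novikov equation. -/
theorem covering_z1_compatible (c₀ c₁ : ℝ) (hc₀ : 0 < c₀) (hc₁ : c₁ ≠ 0)
    (u : ℝ → ℝ → ℝ)
    (hu : ContDiff ℝ (⊤ : ℕ∞) (Function.uncurry u))
    (hux : ∀ x t, Dx u x t ≠ 0)
    (hKN : ∀ x t, Dt u x t = G1 c₀ c₁ u x t) :
    ∀ x t pp, DtExt c₀ c₁ u (Fz1x c₀ c₁ u) x t pp
      = DxExt c₀ c₁ u (Fz1t c₀ c₁ u) x t pp := by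
  intro x t pp
  have hu1 : ContDiff ℝ (⊤ : ℕ∞) (Function.uncurry (Dx u)) := KN_contDiff_Dx u hu
  have hu2 : ContDiff ℝ (⊤ : ℕ∞) (Function.uncurry (Dx (Dx u))) := KN_contDiff_Dx (Dx u) hu1
  have hu3 : ContDiff ℝ (⊤ : ℕ∞) (Function.uncurry (Dx (Dx (Dx u)))) := KN_contDiff_Dx (Dx (Dx u)) hu2
  have Hx0 := KN_slice_x u hu x t
  have Hx1 := KN_slice_x (Dx u) hu1 x t
  have Hx2 := KN_slice_x (Dx (Dx u)) hu2 x t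
  have Hx3 := KN_slice_x (Dx (Dx (Dx u))) hu3 x t
  have Ht0 := KN_slice_t u hu x t
  have Ht1 := KN_slice_t (Dx u) hu1 x t
  have ha1 : Dx u x t ≠ 0 := hux x t
  have hs0 : Real.sqrt c₀ ≠ 0 := ne_of_gt (Real.sqrt_pos.mpr hc₀)
  have hs0sq : Real.sqrt c₀ ^ 2 = c₀ := Real.sq_sqrt hc₀.le
  have h6 : Real.sqrt 6 ^ 2 = 6 := Real.sq_sqrt (by norm_num)
  have hden1 : 12 * c₁ * Real.sqrt c₀ * Dx u x t ≠ 0 :=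
    mul_ne_zero (mul_ne_zero (mul_ne_zero (by norm_num) hc₁) hs0) ha1
  have hden3 : 72 * c₁ * Real.sqrt c₀ * (Dx u x t) ^ 3 ≠ 0 :=
    mul_ne_zero (mul_ne_zero (mul_ne_zero (by norm_num) hc₁) hs0) (pow_ne_zero 3 ha1)
  -- value of `Dt (Dx u)` via the KN equation and Clairaut
  have hT1 : Dt (Dx u) x t = Dx (Dx (Dx (Dx u))) x t
      - (3 * Dx (Dx u) x t * Dx (Dx (Dx u)) x t * Dx u x t
          - 3 / 2 * (Dx (Dx u) x t) ^ 3) / (Dx u x t) ^ 2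
      + ((3 * (u x t) ^ 2 + c₁) * (Dx u x t) ^ 2
          - ((u x t) ^ 3 + c₁ * u x t + c₀) * Dx (Dx u) x t) / (Dx u x t) ^ 2 := by
    rw [KN_comm u hu x t]
    have hfun : (fun y => Dt u y t) = fun y => G1 c₀ c₁ u y t := funext fun y => hKN y t
    show deriv (fun y => Dt u y t) x = _
    rw [hfun]
    have hcomb := (Hx3.sub (((Hx2.pow 2).const_mul (3 / 2 : ℝ)).div Hx1 ha1)).add
      ((((Hx0.pow 3).add (Hx0.const_mul c₁)).add_const c₀).div Hx1 ha1)
    exact (hcomb.congr_deriv (by simp only [Pi.pow_apply, Pi.add_apply, Pi.sub_apply, Pi.mul_apply, Pi.div_apply, Pi.neg_apply]; push_cast; field_simp)).deriv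
  -- rewrite the four functions whose derivatives appear in the goal
  have h1 : (fun s => Fz1x c₀ c₁ u x s pp) = fun s =>
      Real.sqrt 6 * (c₁ * (c₁ * u x s + 2 * c₀) - pp * (u x s * (4 * c₀ * u x s - c₁ ^ 2)))
        / (12 * c₁ * Real.sqrt c₀ * Dx u x s) := by
    funext s
    have h := hux x s
    simp only [Fz1x, k1, k3]
    field_simp
    ring
  have h3 : (fun y => Fz1t c₀ c₁ u y t pp) = fun y =>
      Real.sqrt 6 * (c₁ * (-(6 * c₁ * u y t * Dx u y t * Dx (Dx (Dx u)) y t) - 12 * c₀ * Dx u y t * Dx (Dx (Dx u)) y t + 3 * c₁ * u y t * (Dx (Dx u) y t) ^ 2 + 6 * c₀ * (Dx (Dx u) y t) ^ 2 + 12 * c₁ * (Dx u y t) ^ 2 * Dx (Dx u) y t + 4 * Real.sqrt 6 * Real.sqrt c₀ * (u y t) ^ 2 * (Dx u y t) ^ 2 - 2 * c₁ * (u y t) ^ 4 - 4 * c₀ * (u y t) ^ 3 - 2 * c₁ ^ 2 * (u y t) ^ 2 - 6 * c₀ * c₁ * u y t - 4 * c₀ ^ 2) + pp * (-(6 * c₁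 ^ 2 * u y t * Dx u y t * Dx (Dx (Dx u)) y t) + 24 * c₀ * (u y t) ^ 2 * Dx u y t * Dx (Dx (Dx u)) y t + 3 * c₁ ^ 2 * u y t * (Dx (Dx u) y t) ^ 2 - 12 * c₀ * (u y t) ^ 2 * (Dx (Dx u) y t) ^ 2 + 12 * c₁ ^ 2 * (Dx u y t) ^ 2 * Dx (Dx u) y t - 96 * c₀ * u y t * (Dx u y t) ^ 2 * Dx (Dx u) y t + 96 * c₀ * (Dx u y t) ^ 4 - 4 * Real.sqrt 6 * Real.sqrt c₀ * c₁ ^ 2 * (Dx u y t) ^ 2 + 32 * Real.sqrt 6 * (c₀ * Real.sqrt c₀) * u y t * (Dx u y t) ^ 2 + 8 * Real.sqrt 6 * Real.sqrt c₀ * c₁ * (u y t) ^ 2 * (Dx u y t) ^ 2 + 8 * c₀ * (u y t) ^ 5 - 2 * c₁ ^ 2 * (u y t) ^ 4 + 8 * c₀ * c₁ * (u y t) ^ 3 - 2 * c₁ ^ 3 * (u y t) ^ 2 + 8 * c₀ ^ 2 * (u y t) ^ 2 - 2 * c₀ * c₁ ^ 2 * u y t))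
        / (72 * c₁ * Real.sqrt c₀ * (Dx u y t) ^ 3) := by
    funext y
    have h := hux y t
    simp only [Fz1t, l1, l3]
    field_simp
    ring
  -- derivatives
  have HA : HasDerivAt (fun s =>
      Real.sqrt 6 * (c₁ * (c₁ * u x s + 2 * c₀) - pp * (u x s * (4 * c₀ * u x s - c₁ ^ 2)))
        / (12 * c₁ * Real.sqrt c₀ * Dx u x s))
      (-(Real.sqrt 6 * ((c₁ * u x t + 2 * c₀) * Dt (Dx u) x t - c₁ * Dt u x t * Dx u x t) / (12 * Real.sqrt c₀ * (Dx u x t) ^ 2) + pp * (Real.sqrt 6 * ((8 * c₀ * u x t - c₁ ^ 2) * Dt u x t * Dx u x t - (4 * c₀ * (u x t) ^ 2 - c₁ ^ 2 * u x t) * Dt (Dx u) x t) / (12 * c₁ * Real.sqrt c₀ * (Dx u x t) ^ 2)))) t := by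
    have hcomb := ((((((Ht0.const_mul c₁).add_const (2 * c₀)).const_mul c₁).sub
        ((Ht0.mul ((Ht0.const_mul (4 * c₀)).sub_const (c₁ ^ 2))).const_mul pp)).const_mul
        (Real.sqrt 6)).div (Ht1.const_mul (12 * c₁ * Real.sqrt c₀)) hden1)
    exact hcomb.congr_deriv (by simp only [Pi.pow_apply, Pi.add_apply, Pi.sub_apply, Pi.mul_apply, Pi.div_apply, Pi.neg_apply]; field_simp; ring)
  have HB : HasDerivAt (fun rr => -(k1 c₀ c₁ u x t + rr * k3 c₀ c₁ u x t))
      (-(k3 c₀ c₁ u x t)) pp :=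
    ((((hasDerivAt_id pp).mul_const (k3 c₀ c₁ u x t)).const_add
      (k1 c₀ c₁ u x t)).neg).congr_deriv (by ring)
  have hDA : HasDerivAt (fun y => -(6 * c₁ * u y t * Dx u y t * Dx (Dx (Dx u)) y t) - 12 * c₀ * Dx u y t * Dx (Dx (Dx u)) y t + 3 * c₁ * u y t * (Dx (Dx u) y t) ^ 2 + 6 * c₀ * (Dx (Dx u) y t) ^ 2 + 12 * c₁ * (Dx u y t) ^ 2 * Dx (Dx u) y t + 4 * Real.sqrt 6 * Real.sqrt c₀ * (u y t) ^ 2 * (Dx u y t) ^ 2 - 2 * c₁ * (u y t) ^ 4 - 4 * c₀ * (u y t) ^ 3 - 2 * c₁ ^ 2 * (u y t) ^ 2 - 6 * c₀ * c₁ * u y t - 4 * c₀ ^ 2) (-(6 * c₁ * (Dx u x t * Dx u x t * Dx (Dx (Dx u)) x t + u x t * Dx (Dx u) x t * Dx (Dx (Dx u)) x t + u x t * Dx u x t * Dx (Dx (Dx (Dx u))) x t)) - 12 * c₀ * (Dx (Dx u) x t * Dx (Dx (Dx u)) x t + Dx u x t * Dx (Dx (Dx (Dx u))) x t) + 3 *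 c₁ * (Dx u x t * (Dx (Dx u) x t) ^ 2 + 2 * u x t * Dx (Dx u) x t * Dx (Dx (Dx u)) x t) + 12 * c₀ * Dx (Dx u) x t * Dx (Dx (Dx u)) x t + 12 * c₁ * (2 * Dx u x t * Dx (Dx u) x t * Dx (Dx u) x t + (Dx u x t) ^ 2 * Dx (Dx (Dx u)) x t) + 4 * Real.sqrt 6 * Real.sqrt c₀ * (2 * u x t * Dx u x t * (Dx u x t) ^ 2 + (u x t) ^ 2 * (2 * Dx u x t * Dx (Dx u) x t)) - 8 * c₁ * (u x t) ^ 3 * Dx u x t - 12 * c₀ * (u x t) ^ 2 * Dx u x t - 4 * c₁ ^ 2 * u x t * Dx u x t - 6 * c₀ * c₁ * Dx u x t) x := by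
    have hcomb := (((((((((((((Hx0.const_mul (6 * c₁)).mul Hx1).mul Hx3).neg.sub
      ((Hx1.const_mul (12 * c₀)).mul Hx3)).add
      ((Hx0.const_mul (3 * c₁)).mul (Hx2.pow 2))).add
      ((Hx2.pow 2).const_mul (6 * c₀))).add
      (((Hx1.pow 2).const_mul (12 * c₁)).mul Hx2)).add
      (((Hx0.pow 2).const_mul (4 * Real.sqrt 6 * Real.sqrt c₀)).mul (Hx1.pow 2))).sub
      ((Hx0.pow 4).const_mul (2 * c₁))).sub
      ((Hx0.pow 3).const_mul (4 * c₀))).sub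
      ((Hx0.pow 2).const_mul (2 * c₁ ^ 2))).sub
      (Hx0.const_mul (6 * c₀ * c₁))).sub_const (4 * c₀ ^ 2))
    exact hcomb.congr_deriv (by simp only [Pi.pow_apply, Pi.add_apply, Pi.sub_apply, Pi.mul_apply, Pi.div_apply, Pi.neg_apply]; push_cast; ring)
  have hDB : HasDerivAt (fun y => -(6 * c₁ ^ 2 * u y t * Dx u y t * Dx (Dx (Dx u)) y t) + 24 * c₀ * (u y t) ^ 2 * Dx u y t * Dx (Dx (Dx u)) y t + 3 * c₁ ^ 2 * u y t * (Dx (Dx u) y t) ^ 2 - 12 * c₀ * (u y t) ^ 2 * (Dx (Dx u) y t) ^ 2 + 12 * c₁ ^ 2 * (Dx u y t) ^ 2 * Dx (Dx u) y t - 96 * c₀ * u y t * (Dx u y t) ^ 2 * Dx (Dx u) y t + 96 * c₀ * (Dx u y t) ^ 4 - 4 * Real.sqrt 6 * Real.sqrt c₀ * c₁ ^ 2 * (Dx u y t) ^ 2 + 32 * Real.sqrt 6 * (c₀ * Real.sqrt c₀) * u y t * (Dx u y t) ^ 2 + 8 * Real.sqrt 6 * Real.sqrt c₀ * c₁ * (u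 y t) ^ 2 * (Dx u y t) ^ 2 + 8 * c₀ * (u y t) ^ 5 - 2 * c₁ ^ 2 * (u y t) ^ 4 + 8 * c₀ * c₁ * (u y t) ^ 3 - 2 * c₁ ^ 3 * (u y t) ^ 2 + 8 * c₀ ^ 2 * (u y t) ^ 2 - 2 * c₀ * c₁ ^ 2 * u y t) (-(6 * c₁ ^ 2 * (Dx u x t * Dx u x t * Dx (Dx (Dx u)) x t + u x t * Dx (Dx u) x t * Dx (Dx (Dx u)) x t + u x t * Dx u x t * Dx (Dx (Dx (Dx u))) x t)) + 24 * c₀ * (2 * u x t * Dx u x t * Dx u x t * Dx (Dx (Dx u)) x t + (u x t) ^ 2 * Dx (Dx u) x t * Dx (Dx (Dx u)) x t + (u x t) ^ 2 * Dx u x t * Dx (Dx (Dx (Dx u))) x t) + 3 * c₁ ^ 2 * (Dx u x t * (Dx (Dx u) x t) ^ 2 + 2 * u x t * Dx (Dx u) x t * Dx (Dx (Dx u)) x t) - 12 * c₀ * (2 * u x t * Dx u x t * (Dx (Dx u) x t) ^ 2 + 2 * (u x t) ^ 2 * Dx (Dx u) x t * Dx (Dx (Dx u)) x t) + 12 * c₁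 ^ 2 * (2 * Dx u x t * Dx (Dx u) x t * Dx (Dx u) x t + (Dx u x t) ^ 2 * Dx (Dx (Dx u)) x t) - 96 * c₀ * (Dx u x t * (Dx u x t) ^ 2 * Dx (Dx u) x t + 2 * u x t * Dx u x t * Dx (Dx u) x t * Dx (Dx u) x t + u x t * (Dx u x t) ^ 2 * Dx (Dx (Dx u)) x t) + 384 * c₀ * (Dx u x t) ^ 3 * Dx (Dx u) x t - 8 * Real.sqrt 6 * Real.sqrt c₀ * c₁ ^ 2 * Dx u x t * Dx (Dx u) x t + 32 * Real.sqrt 6 * (c₀ * Real.sqrt c₀) * ((Dx u x t) ^ 3 + 2 * u x t * Dx u x t * Dx (Dx u) x t) + 8 * Real.sqrt 6 * Real.sqrt c₀ * c₁ * (2 * u x t * (Dx u x t) ^ 3 + 2 * (u x t) ^ 2 * Dx u x t * Dx (Dx u) x t) + 40 * c₀ * (u x t) ^ 4 * Dx u x t - 8 * c₁ ^ 2 * (u x t) ^ 3 * Dx u x t + 24 * c₀ * c₁ * (u x t) ^ 2 * Dx u x t - 4 * c₁ ^ 3 * u x t * Dx u x t + 16 * c₀ ^ 2 * u x t * Dx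 u x t - 2 * c₀ * c₁ ^ 2 * Dx u x t) x := by
    have hcomb := ((((((((((((((((((Hx0.const_mul (6 * c₁ ^ 2)).mul Hx1).mul Hx3).neg.add
      ((((Hx0.pow 2).const_mul (24 * c₀)).mul Hx1).mul Hx3)).add
      ((Hx0.const_mul (3 * c₁ ^ 2)).mul (Hx2.pow 2))).sub
      (((Hx0.pow 2).const_mul (12 * c₀)).mul (Hx2.pow 2))).add
      (((Hx1.pow 2).const_mul (12 * c₁ ^ 2)).mul Hx2)).sub
      (((Hx0.const_mul (96 * c₀)).mul (Hx1.pow 2)).mul Hx2)).add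
      ((Hx1.pow 4).const_mul (96 * c₀))).sub
      ((Hx1.pow 2).const_mul (4 * Real.sqrt 6 * Real.sqrt c₀ * c₁ ^ 2))).add
      ((Hx0.const_mul (32 * Real.sqrt 6 * (c₀ * Real.sqrt c₀))).mul (Hx1.pow 2))).add
      (((Hx0.pow 2).const_mul (8 * Real.sqrt 6 * Real.sqrt c₀ * c₁)).mul (Hx1.pow 2))).add
      ((Hx0.pow 5).const_mul (8 * c₀))).sub
      ((Hx0.pow 4).const_mul (2 * c₁ ^ 2))).add
      ((Hx0.pow 3).const_mul (8 * c₀ * c₁))).sub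
      ((Hx0.pow 2).const_mul (2 * c₁ ^ 3))).add
      ((Hx0.pow 2).const_mul (8 * c₀ ^ 2))).sub
      (Hx0.const_mul (2 * c₀ * c₁ ^ 2)))
    exact hcomb.congr_deriv (by simp only [Pi.pow_apply, Pi.add_apply, Pi.sub_apply, Pi.mul_apply, Pi.div_apply, Pi.neg_apply]; push_cast; ring)
  have HC : HasDerivAt (fun y =>
      Real.sqrt 6 * (c₁ * (-(6 * c₁ * u y t * Dx u y t * Dx (Dx (Dx u)) y t) - 12 * c₀ * Dx u y t * Dx (Dx (Dx u)) y t + 3 * c₁ * u y t * (Dx (Dx u) y t) ^ 2 + 6 * c₀ * (Dx (Dx u) y t) ^ 2 + 12 * c₁ * (Dx u y t) ^ 2 * Dx (Dx u) y t + 4 * Real.sqrt 6 * Real.sqrt c₀ * (u y t) ^ 2 * (Dx u y t) ^ 2 - 2 * c₁ * (u y t) ^ 4 - 4 * c₀ * (u y t) ^ 3 - 2 * c₁ ^ 2 * (u y t) ^ 2 - 6 * c₀ * c₁ * u y t - 4 * c₀ ^ 2) + pp * (-(6 * c₁ ^ 2 * u y t * Dx u y t * Dx (Dx (Dx u)) y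 t) + 24 * c₀ * (u y t) ^ 2 * Dx u y t * Dx (Dx (Dx u)) y t + 3 * c₁ ^ 2 * u y t * (Dx (Dx u) y t) ^ 2 - 12 * c₀ * (u y t) ^ 2 * (Dx (Dx u) y t) ^ 2 + 12 * c₁ ^ 2 * (Dx u y t) ^ 2 * Dx (Dx u) y t - 96 * c₀ * u y t * (Dx u y t) ^ 2 * Dx (Dx u) y t + 96 * c₀ * (Dx u y t) ^ 4 - 4 * Real.sqrt 6 * Real.sqrt c₀ * c₁ ^ 2 * (Dx u y t) ^ 2 + 32 * Real.sqrt 6 * (c₀ * Real.sqrt c₀) * u y t * (Dx u y t) ^ 2 + 8 * Real.sqrt 6 * Real.sqrt c₀ * c₁ * (u y t) ^ 2 * (Dx u y t) ^ 2 + 8 * c₀ * (u y t) ^ 5 - 2 * c₁ ^ 2 * (u y t) ^ 4 + 8 * c₀ * c₁ * (u y t) ^ 3 - 2 * c₁ ^ 3 * (u y t) ^ 2 + 8 * c₀ ^ 2 * (u y t) ^ 2 - 2 * c₀ * c₁ ^ 2 * u y t))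
        / (72 * c₁ * Real.sqrt c₀ * (Dx u y t) ^ 3))
      (-(-(Real.sqrt 6 * ((-(6 * c₁ * (Dx u x t * Dx u x t * Dx (Dx (Dx u)) x t + u x t * Dx (Dx u) x t * Dx (Dx (Dx u)) x t + u x t * Dx u x t * Dx (Dx (Dx (Dx u))) x t)) - 12 * c₀ * (Dx (Dx u) x t * Dx (Dx (Dx u)) x t + Dx u x t * Dx (Dx (Dx (Dx u))) x t) + 3 * c₁ * (Dx u x t * (Dx (Dx u) x t) ^ 2 + 2 * u x t * Dx (Dx u) x t * Dx (Dx (Dx u)) x t) + 12 * c₀ * Dx (Dx u) x t * Dx (Dx (Dx u)) x t + 12 * c₁ * (2 * Dx u x t * Dx (Dx u) x t * Dx (Dx u) x t + (Dx u x t) ^ 2 * Dx (Dx (Dx u)) x t) + 4 * Real.sqrt 6 * Real.sqrt c₀ * (2 * u x t * Dx u x t * (Dx u x t) ^ 2 + (u x t) ^ 2 * (2 * Dx u x t * Dx (Dx u) x t)) - 8 * c₁ * (u x t) ^ 3 * Dx u x t - 12 * c₀ * (u x t) ^ 2 * Dx u x t - 4 * c₁ ^ 2 * u x t * Dx u x t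 - 6 * c₀ * c₁ * Dx u x t) * Dx u x t - 3 * (-(6 * c₁ * u x t * Dx u x t * Dx (Dx (Dx u)) x t) - 12 * c₀ * Dx u x t * Dx (Dx (Dx u)) x t + 3 * c₁ * u x t * (Dx (Dx u) x t) ^ 2 + 6 * c₀ * (Dx (Dx u) x t) ^ 2 + 12 * c₁ * (Dx u x t) ^ 2 * Dx (Dx u) x t + 4 * Real.sqrt 6 * Real.sqrt c₀ * (u x t) ^ 2 * (Dx u x t) ^ 2 - 2 * c₁ * (u x t) ^ 4 - 4 * c₀ * (u x t) ^ 3 - 2 * c₁ ^ 2 * (u x t) ^ 2 - 6 * c₀ * c₁ * u x t - 4 * c₀ ^ 2) * Dx (Dx u) x t)) / (72 * Real.sqrt c₀ * (Dx u x t) ^ 4) + pp * (-(Real.sqrt 6 * ((-(6 * c₁ ^ 2 * (Dx u x t * Dx u x t * Dx (Dx (Dx u)) x t + u x t * Dx (Dx u) x t * Dx (Dx (Dx u)) x t + u x t * Dx u x t * Dx (Dx (Dx (Dx u))) x t)) + 24 * c₀ * (2 * u x t * Dx u x t * Dx u x t * Dx (Dx (Dx u)) x t + (u x t) ^ 2 *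 Dx (Dx u) x t * Dx (Dx (Dx u)) x t + (u x t) ^ 2 * Dx u x t * Dx (Dx (Dx (Dx u))) x t) + 3 * c₁ ^ 2 * (Dx u x t * (Dx (Dx u) x t) ^ 2 + 2 * u x t * Dx (Dx u) x t * Dx (Dx (Dx u)) x t) - 12 * c₀ * (2 * u x t * Dx u x t * (Dx (Dx u) x t) ^ 2 + 2 * (u x t) ^ 2 * Dx (Dx u) x t * Dx (Dx (Dx u)) x t) + 12 * c₁ ^ 2 * (2 * Dx u x t * Dx (Dx u) x t * Dx (Dx u) x t + (Dx u x t) ^ 2 * Dx (Dx (Dx u)) x t) - 96 * c₀ * (Dx u x t * (Dx u x t) ^ 2 * Dx (Dx u) x t + 2 * u x t * Dx u x t * Dx (Dx u) x t * Dx (Dx u) x t + u x t * (Dx u x t) ^ 2 * Dx (Dx (Dx u)) x t) + 384 * c₀ * (Dx u x t) ^ 3 * Dx (Dx u) x t - 8 * Real.sqrt 6 * Real.sqrt c₀ * c₁ ^ 2 * Dx u x t * Dx (Dx u) x t + 32 * Real.sqrt 6 * (c₀ * Real.sqrt c₀) * ((Dx u x t) ^ 3 + 2 * u x t * Dx u x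 t * Dx (Dx u) x t) + 8 * Real.sqrt 6 * Real.sqrt c₀ * c₁ * (2 * u x t * (Dx u x t) ^ 3 + 2 * (u x t) ^ 2 * Dx u x t * Dx (Dx u) x t) + 40 * c₀ * (u x t) ^ 4 * Dx u x t - 8 * c₁ ^ 2 * (u x t) ^ 3 * Dx u x t + 24 * c₀ * c₁ * (u x t) ^ 2 * Dx u x t - 4 * c₁ ^ 3 * u x t * Dx u x t + 16 * c₀ ^ 2 * u x t * Dx u x t - 2 * c₀ * c₁ ^ 2 * Dx u x t) * Dx u x t - 3 * (-(6 * c₁ ^ 2 * u x t * Dx u x t * Dx (Dx (Dx u)) x t) + 24 * c₀ * (u x t) ^ 2 * Dx u x t * Dx (Dx (Dx u)) x t + 3 * c₁ ^ 2 * u x t * (Dx (Dx u) x t) ^ 2 - 12 * c₀ * (u x t) ^ 2 * (Dx (Dx u) x t) ^ 2 + 12 * c₁ ^ 2 * (Dx u x t) ^ 2 * Dx (Dx u) x t - 96 * c₀ * u x t * (Dx u x t) ^ 2 * Dx (Dx u) x t + 96 * c₀ * (Dx u x t) ^ 4 - 4 * Real.sqrt 6 * Real.sqrt c₀ * c₁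 ^ 2 * (Dx u x t) ^ 2 + 32 * Real.sqrt 6 * (c₀ * Real.sqrt c₀) * u x t * (Dx u x t) ^ 2 + 8 * Real.sqrt 6 * Real.sqrt c₀ * c₁ * (u x t) ^ 2 * (Dx u x t) ^ 2 + 8 * c₀ * (u x t) ^ 5 - 2 * c₁ ^ 2 * (u x t) ^ 4 + 8 * c₀ * c₁ * (u x t) ^ 3 - 2 * c₁ ^ 3 * (u x t) ^ 2 + 8 * c₀ ^ 2 * (u x t) ^ 2 - 2 * c₀ * c₁ ^ 2 * u x t) * Dx (Dx u) x t)) / (72 * c₁ * Real.sqrt c₀ * (Dx u x t) ^ 4)))) x := by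
    have hcomb := (((hDA.const_mul c₁).add (hDB.const_mul pp)).const_mul (Real.sqrt 6)).div
      ((Hx1.pow 3).const_mul (72 * c₁ * Real.sqrt c₀)) hden3
    exact hcomb.congr_deriv (by simp only [Pi.pow_apply, Pi.add_apply, Pi.sub_apply, Pi.mul_apply, Pi.div_apply, Pi.neg_apply]; push_cast; field_simp; ring)
  have HD : HasDerivAt (fun rr => -(l1 c₀ c₁ u x t + rr * l3 c₀ c₁ u x t))
      (-(l3 c₀ c₁ u x t)) pp :=
    ((((hasDerivAt_id pp).mul_const (l3 c₀ c₁ u x t)).const_add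
      (l1 c₀ c₁ u x t)).neg).congr_deriv (by ring)
  -- assemble
  simp only [DtExt, DxExt]
  rw [h1, h3,
    show (fun rr => Fz1x c₀ c₁ u x t rr)
      = (fun rr => -(k1 c₀ c₁ u x t + rr * k3 c₀ c₁ u x t)) from rfl,
    show (fun rr => Fz1t c₀ c₁ u x t rr)
      = (fun rr => -(l1 c₀ c₁ u x t + rr * l3 c₀ c₁ u x t)) from rfl]
  rw [HA.deriv, HB.deriv, HC.deriv, HD.deriv]
  rw [hT1, hKN x t]
  simp only [Fp1x, Fp1t, G1, Pcub, k1, k2, k3, l1, l2, l3]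
  set s6 := Real.sqrt 6 with hs6def
  set s0 := Real.sqrt c₀ with hs0def
  rw [← hs0sq]
  have e2 : s6 ^ 2 = 6 := h6
  have e3 : s6 ^ 3 = 6 * s6 := by rw [show s6 ^ 3 = s6 ^ 2 * s6 by ring, e2]
  have e4 : s6 ^ 4 = 36 := by rw [show s6 ^ 4 = (s6 ^ 2) ^ 2 by ring, e2]; norm_num
  have e5 : s6 ^ 5 = 36 * s6 := by rw [show s6 ^ 5 = (s6 ^ 2) ^ 2 * s6 by ring, e2]; norm_num
  have e6 : s6 ^ 6 = 216 := by rw [show s6 ^ 6 = (s6 ^ 2) ^ 3 by ring, e2]; norm_num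
  field_simp
  ring_nf
  simp only [e2, e3, e4, e5, e6]
  ring
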